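/- arXiv:2110.03406 — 3 statements merged into one kernel-verified Lean document; each statement's English description precedes it below -/
import Mathlib

section
/- Let f : [0,T] → ℝ be continuous and let g : [0,T] → ℝ be càdlàg and of bounded variation on [0,T]. Then sup_{t∈[0,T]} | (1/ε) ∫₀^t ( g((s+ε)∧t) − g(s) ) ( f((s+ε)∧t) − f(s) ) ds | → 0 as ε ↓ 0. In other words, the pathwise quadratic covariation [g,f], defined as the uniform limit as ε ↓ 0 of t ↦ (1/ε)∫₀^t (g((s+ε)∧t) − g(s))(f((s+ε)∧t) − f(s)) ds, exists and is identically 0. (This is the deterministic content of the claim that an adapted process with finite variation is orthogonal to every continuous local martingale.) -/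
/-!
The variation function `W x = Var(g, [0,T] ∩ (-∞, x])` is monotone and dominates the increments
of `g`. Once `ε` is below a modulus of uniform continuity of `f` for the tolerance `δ`, the
integrand is therefore at most `δ (W (s + ε) - W s)`, and for monotone `W`
`∫₀ᵗ (W (s + ε) - W s) ds = ∫ₜ^{t+ε} W - ∫₀^ε W ≤ ε Var(g, [0,T])`.
Hence the normalised integral is at most `δ Var(g, [0,T])`, uniformly in `t`.
-/

noncomputable section
open Filter Topology

/-- A function `x : ℝ → E`, viewed as a path on `[0,T]`, is càdlàg on `[0,T]`:
right-continuous at every `t ∈ [0,T)` and with a left limit at every `t ∈ (0,T]`. -/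
def IsCadlagOn {E : Type*} [TopologicalSpace E] (T : ℝ) (x : ℝ → E) : Prop :=
  (∀ t ∈ Set.Ico (0 : ℝ) T, ContinuousWithinAt x (Set.Ici t) t) ∧
  ∀ t ∈ Set.Ioc (0 : ℝ) T, ∃ L, Tendsto x (𝓝[<] t) (𝓝 L)

open Set MeasureTheory

theorem BoundedVariationOn.exists_monotone_majorant {E : Type*} [PseudoMetricSpace E]
    {g : ℝ → E} {S : Set ℝ} (hg : BoundedVariationOn g S) :
    ∃ W : ℝ → ℝ, Monotone W ∧
      (∀ x ∈ S, ∀ y ∈ S, x ≤ y → dist (g x) (g y) ≤ W y - W x) ∧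
      ∀ x y, W y - W x ≤ (eVariationOn g S).toReal := by
  have hfin : ∀ x, eVariationOn g (S ∩ Iic x) ≠ ⊤ := fun x =>
    ne_top_of_le_ne_top hg (eVariationOn.mono g inter_subset_left)
  refine ⟨fun x => (eVariationOn g (S ∩ Iic x)).toReal, fun x y hxy => ?_,
    fun x hx y hy hxy => ?_, fun x y => ?_⟩
  · exact ENNReal.toReal_mono (hfin y) (eVariationOn.mono g (by gcongr))
  · have hsplit : S ∩ Iic y = (S ∩ Iic x) ∪ (S ∩ Icc x y) := by
      rw [← inter_union_distrib_left, Iic_union_Icc_eq_Iic hxy]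
    have hunion := eVariationOn.union g (s := S ∩ Iic x) (t := S ∩ Icc x y)
      ⟨⟨hx, mem_Iic.2 le_rfl⟩, fun z hz => hz.2⟩ ⟨⟨hx, le_rfl, hxy⟩, fun z hz => hz.2.1⟩
    have hinc : edist (g x) (g y) ≤ eVariationOn g (S ∩ Icc x y) :=
      eVariationOn.edist_le g ⟨hx, le_rfl, hxy⟩ ⟨hy, hxy, le_rfl⟩
    have hfin' : eVariationOn g (S ∩ Icc x y) ≠ ⊤ :=
      ne_top_of_le_ne_top hg (eVariationOn.mono g inter_subset_left)
    beta_reduce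
    rw [hsplit, hunion, ENNReal.toReal_add (hfin x) hfin', add_sub_cancel_left, dist_edist]
    exact ENNReal.toReal_mono hfin' hinc
  · exact (sub_le_self _ ENNReal.toReal_nonneg).trans
      (ENNReal.toReal_mono hg (eVariationOn.mono g inter_subset_left))

theorem Monotone.intervalIntegral_comp_add_sub_le {W : ℝ → ℝ} (hW : Monotone W) {a b ε : ℝ}
    (hε : 0 ≤ ε) :
    ∫ x in a..b, (W (x + ε) - W x) ≤ ε * (W (b + ε) - W a) := by
  have hint : ∀ c d : ℝ, IntervalIntegrable W volume c d := fun _ _ => hW.intervalIntegrable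
  have hshift : IntervalIntegrable (fun x => W (x + ε)) volume a b :=
    (hW.comp (monotone_id.add_const ε)).intervalIntegrable
  have htail : ∫ x in b..b + ε, W x ≤ ε * W (b + ε) := by
    calc ∫ x in b..b + ε, W x ≤ ∫ _ in b..b + ε, W (b + ε) :=
          intervalIntegral.integral_mono_on (by linarith) (hint _ _) intervalIntegrable_const
            fun x hx => hW hx.2
      _ = ε * W (b + ε) := by simp
  have hhead : ε * W a ≤ ∫ x in a..a + ε, W x := by
    calc ε * W a = ∫ _ in a..a + ε, W a := by simp
      _ ≤ ∫ x in a..a + ε, W x :=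
          intervalIntegral.integral_mono_on (by linarith) intervalIntegrable_const (hint _ _)
            fun x hx => hW hx.1
  rw [intervalIntegral.integral_sub hshift (hint a b),
    intervalIntegral.integral_comp_add_right W ε,
    intervalIntegral.integral_interval_sub_interval_comm (hint _ _) (hint _ _) (hint _ _),
    intervalIntegral.integral_symm a, intervalIntegral.integral_symm b]
  linarith

theorem abs_integral_mul_increments_le {f g : ℝ → ℝ} {S : Set ℝ} {a t ε δ : ℝ}
    (hat : a ≤ t) (hS : Icc a t ⊆ S) (hε : 0 ≤ ε) (hg : BoundedVariationOn g S)
    (hf : ∀ x ∈ S, ∀ y ∈ S, dist x y ≤ ε → dist (f x) (f y) ≤ δ) :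
    |∫ s in a..t, (g (min (s + ε) t) - g s) * (f (min (s + ε) t) - f s)|
      ≤ δ * ε * (eVariationOn g S).toReal := by
  obtain ⟨W, hW, hgW, hWV⟩ := hg.exists_monotone_majorant
  have hδ : 0 ≤ δ := dist_nonneg.trans (hf a (hS ⟨le_rfl, hat⟩) a (hS ⟨le_rfl, hat⟩)
    ((dist_self a).trans_le hε))
  have hpointwise : ∀ s ∈ Ioc a t, ‖(g (min (s + ε) t) - g s) * (f (min (s + ε) t) - f s)‖
      ≤ δ * (W (s + ε) - W s) := by
    rintro s ⟨has, hst⟩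
    have hsm : s ≤ min (s + ε) t := le_min (by linarith) hst
    have hsS : s ∈ S := hS ⟨has.le, hst⟩
    have hmS : min (s + ε) t ∈ S := hS ⟨has.le.trans hsm, min_le_right _ _⟩
    have hgs : |g (min (s + ε) t) - g s| ≤ W (s + ε) - W s := by
      rw [← Real.dist_eq, dist_comm]
      linarith [hgW s hsS _ hmS hsm, hW (min_le_left (s + ε) t)]
    have hfs : |f (min (s + ε) t) - f s| ≤ δ := by
      rw [← Real.dist_eq]
      refine hf _ hmS s hsS ?_
      rw [Real.dist_eq, abs_of_nonneg (sub_nonneg.2 hsm)]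
      linarith [min_le_left (s + ε) t]
    rw [Real.norm_eq_abs, abs_mul, mul_comm δ]
    exact mul_le_mul hgs hfs (abs_nonneg _) (hgs.trans' (abs_nonneg _))
  have hbound : IntervalIntegrable (fun s => δ * (W (s + ε) - W s)) volume a t :=
    (((hW.comp (monotone_id.add_const ε)).intervalIntegrable).sub
      hW.intervalIntegrable).const_mul δ
  calc |∫ s in a..t, (g (min (s + ε) t) - g s) * (f (min (s + ε) t) - f s)|
      ≤ ∫ s in a..t, δ * (W (s + ε) - W s) :=
        intervalIntegral.norm_integral_le_of_norm_le hat (ae_of_all _ hpointwise) hbound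
    _ = δ * ∫ s in a..t, (W (s + ε) - W s) := intervalIntegral.integral_const_mul δ _
    _ ≤ δ * (ε * (W (t + ε) - W a)) := by gcongr; exact hW.intervalIntegral_comp_add_sub_le hε
    _ ≤ δ * ε * (eVariationOn g S).toReal := by
        rw [← mul_assoc]; gcongr; exact hWV _ _

theorem stmt4_general (T : ℝ) (f g : ℝ → ℝ)
    (hf : ContinuousOn f (Set.Icc (0 : ℝ) T))
    (hgbv : BoundedVariationOn g (Set.Icc (0 : ℝ) T)) :
    Tendsto
      (fun ε : ℝ => ⨆ t : Set.Icc (0 : ℝ) T,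
        |(1 / ε) * ∫ s in (0 : ℝ)..(t.1 : ℝ),
            (g (min (s + ε) t.1) - g s) * (f (min (s + ε) t.1) - f s)|)
      (𝓝[>] 0) (𝓝 0) := by
  set V := (eVariationOn g (Icc 0 T)).toReal
  have hV : 0 ≤ V := ENNReal.toReal_nonneg
  refine tendsto_order.2 ⟨fun b hb => Eventually.of_forall fun ε =>
    hb.trans_le (Real.iSup_nonneg fun _ => abs_nonneg _), fun η hη => ?_⟩
  obtain ⟨ρ, hρ, hfρ⟩ := Metric.uniformContinuousOn_iff_le.1
    (isCompact_Icc.uniformContinuousOn_of_continuous hf) (η / (V + 1)) (by positivity)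
  filter_upwards [Ioc_mem_nhdsGT hρ] with ε ⟨hε, hερ⟩
  calc _ ≤ η / (V + 1) * V := Real.iSup_le (fun t => ?_) (by positivity)
    _ < η := by rw [div_mul_eq_mul_div, div_lt_iff₀ (by positivity)]; nlinarith
  have hI := abs_integral_mul_increments_le t.2.1 (Icc_subset_Icc_right t.2.2) hε.le hgbv
    fun x hx y hy hxy => hfρ x hx y hy (hxy.trans hερ)
  rw [abs_mul, abs_of_pos (one_div_pos.2 hε)]
  calc 1 / ε * |_| ≤ 1 / ε * (η / (V + 1) * ε * V) := by gcongr
    _ = η / (V + 1) * V := by field_simp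

/-- If `f` is continuous on `[0,T]` and `g` is càdlàg with bounded variation on `[0,T]`, then
the regularized quadratic covariation `[g,f]` exists and vanishes identically:
`sup_{t∈[0,T]} |(1/ε) ∫₀^t (g((s+ε)∧t) - g(s)) (f((s+ε)∧t) - f(s)) ds| → 0` as `ε ↓ 0`. -/
theorem stmt4 (T : ℝ) (hT : 0 < T) (f g : ℝ → ℝ)
    (hf : ContinuousOn f (Set.Icc (0 : ℝ) T))
    (hg : IsCadlagOn T g)
    (hgbv : BoundedVariationOn g (Set.Icc (0 : ℝ) T)) :
    Tendsto
      (fun ε : ℝ => ⨆ t : Set.Icc (0 : ℝ) T,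
        |(1 / ε) * ∫ s in (0 : ℝ)..(t.1 : ℝ),
            (g (min (s + ε) t.1) - g s) * (f (min (s + ε) t.1) - f s)|)
      (𝓝[>] 0) (𝓝 0) :=
  stmt4_general T f g hf hgbv
end
end

section
/- Let F : Θ → ℝ be non-anticipative, x ∈ D([0,T]) and n : [0,T] → ℝ continuous; write s⊕ε := (s+ε)∧T for s ∈ [0,T], ε > 0. Assume there exist a function φ : ℝ₊ → ℝ₊ with sup_{0≤y≤K} φ(y) < ∞ for every K > 0, and a non-decreasing function b : [0,T] → ℝ, such that |F(s⊕ε, x) − F(s⊕ε, x_{s∧} ⊞_{s⊕ε} x(s⊕ε))| ≤ ∫_{(s, s⊕ε)} φ(|x(u−) − x(s)|) db(u) for all s ∈ [0,T] and ε > 0, where the integral is the Lebesgue–Stieltjes integral with respect to b. Then sup_{t∈[0,T]} | (1/ε) ∫₀^t ( F(s⊕ε, x) − F(s⊕ε, x_{s∧} ⊞_{s⊕ε} x(s⊕ε)) ) ( n(s⊕ε) − n(s) ) ds | → 0 as ε ↓ 0. (This is the pathwise content of Remark 3.2: such a bound implies that the pair (F, X) satisfies Assumption (A), i.e. the displayed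 expression converges to 0 u.c.p. when x is replaced by a càdlàg process X and n by any continuous martingale N.) -/
noncomputable section
open Filter Topology MeasureTheory

/-- The stopped path `x_{t∧}`. -/
def stopAt {E : Type*} (x : ℝ → E) (t : ℝ) : ℝ → E := fun s => if s < t then x s else x t

/-- The path `x ⊞_t y`, equal to `x` on `[0,t)` and to the constant `y` on `[t,T]`. -/
def bplus {E : Type*} (x : ℝ → E) (t : ℝ) (y : E) : ℝ → E :=
  fun s => if s < t then x s else y

/-- A functional on `Θ` is non-anticipative if `F(t,x) = F(t, x_{t∧})`. -/
def NonAnticipative {E α : Type*} (T : ℝ) (F : ℝ → (ℝ → E) → α) : Prop :=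
  ∀ t ∈ Set.Icc (0 : ℝ) T, ∀ x, F t x = F t (stopAt x t)

/-! A càdlàg path is bounded on `[0,T]` together with its left limits, so `φ(|x(u-) - x(s)|)` is
bounded by a constant `K` and the hypothesis bounds the horizontal increment at `s` by
`K (g(s⊕ε) - g(s))`, where `g` is the Stieltjes function of `b`. For monotone `g` the integral
`∫₀^t (g(s⊕ε) - g(s)) ds` telescopes into the difference of two averages of `g` over intervals
of length `ε`, hence is at most `ε (g(T) - g(0))`. The expression is therefore bounded by
`K (g(T) - g(0)) sup_s |n(s⊕ε) - n(s)|`, which tends to `0` by uniform continuity of `n`. -/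

open Set Bornology Metric

theorem IsCadlagOn.isBounded_image {E : Type*} [PseudoMetricSpace E] {T : ℝ} {x : ℝ → E}
    (hx : IsCadlagOn T x) : IsBounded (x '' Icc 0 T) := by
  refine isCompact_Icc.induction_on (p := fun A => IsBounded (x '' A)) (by simp)
    (fun A B hAB hB => hB.subset (image_mono hAB))
    (fun A B hA hB => by simpa only [image_union] using hA.union hB) fun t ht => ?_
  obtain ⟨L, hL⟩ : ∃ L, Tendsto x (𝓝[Icc 0 T ∩ Iio t] t) (𝓝 L) := by
    rcases lt_or_eq_of_le ht.1 with h0 | rfl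
    · obtain ⟨L, hL⟩ := hx.2 t ⟨h0, ht.2⟩
      exact ⟨L, hL.mono_left (nhdsWithin_mono t inter_subset_right)⟩
    · refine ⟨x 0, ?_⟩
      rw [show Icc 0 T ∩ Iio (0 : ℝ) = ∅ from
        eq_empty_of_forall_notMem fun u hu => hu.2.not_ge hu.1.1, nhdsWithin_empty]
      exact tendsto_bot
  have hR : Tendsto x (𝓝[Icc 0 T ∩ Ici t] t) (𝓝 (x t)) := by
    rcases lt_or_eq_of_le ht.2 with htT | rfl
    · exact (hx.1 t ⟨ht.1, htT⟩).mono_left (nhdsWithin_mono t inter_subset_right)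
    · refine (tendsto_pure_nhds x t).mono_left ?_
      rw [← nhdsWithin_singleton]
      exact nhdsWithin_mono t fun u hu => le_antisymm hu.1.2 hu.2
  obtain ⟨U, hU, hUb⟩ := exists_isBounded_image_of_tendsto hL
  obtain ⟨V, hV, hVb⟩ := exists_isBounded_image_of_tendsto hR
  refine ⟨U ∪ V, ?_, by simpa only [image_union] using hUb.union hVb⟩
  have hsplit : Icc 0 T = (Icc 0 T ∩ Iio t) ∪ (Icc 0 T ∩ Ici t) := by
    rw [← inter_union_distrib_left, Iio_union_Ici, inter_univ]
  rw [hsplit, nhdsWithin_union]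
  exact union_mem_sup hU hV

theorem IsCadlagOn.leftLim_mem_closure {E : Type*} [MetricSpace E] {T : ℝ} {x : ℝ → E}
    (hx : IsCadlagOn T x) {u : ℝ} (hu : u ∈ Ioc 0 T) :
    Function.leftLim x u ∈ closure (x '' Icc 0 T) := by
  obtain ⟨L, hL⟩ := hx.2 u hu
  rw [leftLim_eq_of_tendsto hL]
  refine mem_closure_of_tendsto hL ?_
  filter_upwards [Ioo_mem_nhdsLT hu.1] with s hs
  exact mem_image_of_mem x ⟨hs.1.le, hs.2.le.trans hu.2⟩

theorem StieltjesFunction.setIntegral_Ioo_le (g : StieltjesFunction ℝ) {f : ℝ → ℝ} {a b M : ℝ}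
    (hab : a ≤ b) (hM : 0 ≤ M) (hf : ∀ u ∈ Ioo a b, f u ≤ M) :
    ∫ u in Ioo a b, f u ∂g.measure ≤ M * (g b - g a) := by
  have hμ : g.measure.real (Ioo a b) ≤ g b - g a := by
    rw [← ENNReal.toReal_ofReal (sub_nonneg.2 (g.mono hab)), ← g.measure_Ioc]
    exact measureReal_mono Ioo_subset_Ioc_self (by simp [g.measure_Ioc])
  by_cases hint : IntegrableOn f (Ioo a b) g.measure
  · calc ∫ u in Ioo a b, f u ∂g.measure ≤ ∫ _ in Ioo a b, M ∂g.measure :=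
          setIntegral_mono_on hint (integrableOn_const (by simp [measure_Ioo])) measurableSet_Ioo hf
      _ = M * g.measure.real (Ioo a b) := by rw [setIntegral_const, smul_eq_mul, mul_comm]
      _ ≤ M * (g b - g a) := mul_le_mul_of_nonneg_left hμ hM
  · rw [integral_undef hint]
    exact mul_nonneg hM (sub_nonneg.2 (g.mono hab))

theorem Monotone.integral_comp_add_sub_le {h : ℝ → ℝ} (hh : Monotone h) {ε : ℝ} (hε : 0 ≤ ε)
    (a b : ℝ) : ∫ s in a..b, (h (s + ε) - h s) ≤ ε * (h (b + ε) - h a) := by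
  have hint : ∀ c d, IntervalIntegrable h volume c d := fun c d =>
    (hh.monotoneOn _).intervalIntegrable
  have hshift : IntervalIntegrable (fun s => h (s + ε)) volume a b :=
    ((hh.comp (monotone_id.add_const ε)).monotoneOn _).intervalIntegrable
  rw [intervalIntegral.integral_sub hshift (hint a b),
    intervalIntegral.integral_comp_add_right,
    intervalIntegral.integral_interval_sub_interval_comm (hint _ _) (hint _ _) (hint _ _),
    intervalIntegral.integral_symm a, intervalIntegral.integral_symm b]
  have hb : ∫ s in b..b + ε, h s ≤ ε * h (b + ε) := by
    simpa using intervalIntegral.integral_mono_on (a := b) (b := b + ε) (g := fun _ => h (b + ε))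
      (by linarith) (hint _ _) intervalIntegrable_const fun s hs => hh hs.2
  have ha : ε * h a ≤ ∫ s in a..a + ε, h s := by
    simpa using intervalIntegral.integral_mono_on (a := a) (b := a + ε) (f := fun _ => h a)
      (by linarith) intervalIntegrable_const (hint _ _) fun s hs => hh hs.1
  linarith

theorem ContinuousOn.tendstoUniformlyOn_comp_min_add_sub {n : ℝ → ℝ} {T : ℝ}
    (hn : ContinuousOn n (Icc 0 T)) :
    TendstoUniformlyOn (fun ε s => n (min (s + ε) T) - n s) 0 (𝓝[>] 0) (Icc 0 T) := by
  rw [Metric.tendstoUniformlyOn_iff]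
  intro η hη
  obtain ⟨δ, hδ, hnδ⟩ :=
    Metric.uniformContinuousOn_iff.1 (isCompact_Icc.uniformContinuousOn_of_continuous hn) η hη
  filter_upwards [Ioo_mem_nhdsGT hδ] with ε hε s hs
  have hsε : s ≤ min (s + ε) T := le_min (by linarith [hε.1]) hs.2
  have hdist : dist (min (s + ε) T) s < δ := by
    rw [Real.dist_eq, abs_of_nonneg (sub_nonneg.2 hsε)]
    linarith [min_le_left (s + ε) T, hε.2]
  simpa [Real.dist_eq, abs_sub_comm] using
    hnδ _ ⟨hs.1.trans hsε, min_le_right _ _⟩ s hs hdist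

theorem integral_comp_min_add_sub_le {g : ℝ → ℝ} (hg : Monotone g) {T ε t : ℝ} (hε : 0 ≤ ε)
    (ht : t ∈ Icc 0 T) : ∫ s in 0..t, (g (min (s + ε) T) - g s) ≤ ε * (g T - g 0) := by
  have hh : Monotone fun u => g (min u T) := hg.comp (monotone_id.min monotone_const)
  have hcongr : ∫ s in 0..t, (g (min (s + ε) T) - g s) =
      ∫ s in 0..t, (g (min (s + ε) T) - g (min s T)) := by
    refine intervalIntegral.integral_congr fun s hs => ?_
    rw [uIcc_of_le ht.1] at hs
    simp only [min_eq_left (hs.2.trans ht.2)]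
  calc ∫ s in 0..t, (g (min (s + ε) T) - g s)
      ≤ ε * (g (min (t + ε) T) - g (min 0 T)) := hcongr ▸ hh.integral_comp_add_sub_le hε 0 t
    _ ≤ ε * (g T - g 0) := by
      rw [min_eq_left (ht.1.trans ht.2)]
      exact mul_le_mul_of_nonneg_left (by linarith [hg (min_le_right (t + ε) T)]) hε

theorem abs_one_div_mul_integral_mul_le {g G N : ℝ → ℝ} (hg : Monotone g) {T ε t K η : ℝ} (hε : 0 < ε)
    (ht : t ∈ Icc 0 T) (hK : 0 ≤ K) (hη : 0 ≤ η)
    (hG : ∀ s ∈ Icc 0 T, |G s| ≤ K * (g (min (s + ε) T) - g s))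
    (hN : ∀ s ∈ Icc 0 T, |N s| ≤ η) :
    |(1 / ε) * ∫ s in 0..t, G s * N s| ≤ K * (g T - g 0) * η := by
  have hΔg : IntervalIntegrable (fun s => g (min (s + ε) T) - g s) volume 0 t :=
    ((hg.comp ((monotone_id.add_const ε).min monotone_const)).monotoneOn _).intervalIntegrable.sub
      ((hg.monotoneOn _).intervalIntegrable)
  have hpointwise : ∀ s ∈ Ioc 0 t, ‖G s * N s‖ ≤ K * η * (g (min (s + ε) T) - g s) := by
    intro s hs
    have hsT : s ∈ Icc 0 T := ⟨hs.1.le, hs.2.trans ht.2⟩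
    rw [Real.norm_eq_abs, abs_mul]
    calc |G s| * |N s| ≤ K * (g (min (s + ε) T) - g s) * η :=
          mul_le_mul (hG s hsT) (hN s hsT) (abs_nonneg _) ((abs_nonneg _).trans (hG s hsT))
      _ = K * η * (g (min (s + ε) T) - g s) := by ring
  have hnorm := intervalIntegral.norm_integral_le_of_norm_le ht.1
    (ae_of_all _ hpointwise) (hΔg.const_mul (K * η))
  rw [intervalIntegral.integral_const_mul] at hnorm
  rw [abs_mul, abs_of_pos (one_div_pos.2 hε), ← Real.norm_eq_abs]
  calc 1 / ε * ‖∫ s in 0..t, G s * N s‖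
      ≤ 1 / ε * (K * η * (ε * (g T - g 0))) := by
        gcongr
        exact hnorm.trans (mul_le_mul_of_nonneg_left
          (integral_comp_min_add_sub_le hg hε.le ht) (mul_nonneg hK hη))
    _ = K * (g T - g 0) * η := by field_simp

theorem tendsto_iSup_abs_integral_mul_sub {G : ℝ → ℝ → ℝ} {g n : ℝ → ℝ} {T K : ℝ}
    (hT : 0 ≤ T) (hg : Monotone g) (hK : 0 ≤ K)
    (hG : ∀ s ∈ Icc 0 T, ∀ ε > 0, |G ε s| ≤ K * (g (min (s + ε) T) - g s))
    (hn : ContinuousOn n (Icc 0 T)) :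
    Tendsto (fun ε => ⨆ t : Icc 0 T,
      |(1 / ε) * ∫ s in 0..(t : ℝ), G ε s * (n (min (s + ε) T) - n s)|) (𝓝[>] 0) (𝓝 0) := by
  have hQ : 0 ≤ K * (g T - g 0) := mul_nonneg hK (sub_nonneg.2 (hg hT))
  refine tendsto_order.2 ⟨fun a ha => Eventually.of_forall fun ε =>
    ha.trans_le (Real.iSup_nonneg fun _ => abs_nonneg _), fun a ha => ?_⟩
  set η := a / (K * (g T - g 0) + 1)
  have hη : 0 < η := by positivity
  have hQη : K * (g T - g 0) * η < a := by
    rw [mul_div_assoc', div_lt_iff₀ (by positivity)]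
    nlinarith
  filter_upwards [Metric.tendstoUniformlyOn_iff.1 hn.tendstoUniformlyOn_comp_min_add_sub η hη,
    self_mem_nhdsWithin] with ε hN hε
  refine (Real.iSup_le (fun t => abs_one_div_mul_integral_mul_le hg hε t.2 hK hη.le
    (fun s hs => hG s hs ε hε) fun s hs => ?_) (mul_nonneg hQ hη.le)).trans_lt hQη
  simpa [Real.dist_eq, abs_sub_comm] using (hN s hs).le

theorem stmt8_general (T : ℝ) (hT : 0 < T) (d : ℕ)
    (F : ℝ → (ℝ → EuclideanSpace ℝ (Fin d)) → ℝ)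
    (x : ℝ → EuclideanSpace ℝ (Fin d)) (hx : IsCadlagOn T x)
    (n : ℝ → ℝ) (hn : ContinuousOn n (Set.Icc (0 : ℝ) T))
    (φ : ℝ → ℝ)
    (hφb : ∀ K > (0 : ℝ), BddAbove (φ '' Set.Icc (0 : ℝ) K))
    (b : ℝ → ℝ) (hb : Monotone b)
    (hbound : ∀ s ∈ Set.Icc (0 : ℝ) T, ∀ ε > (0 : ℝ),
      |F (min (s + ε) T) x -
          F (min (s + ε) T) (bplus (stopAt x s) (min (s + ε) T) (x (min (s + ε) T)))| ≤
        ∫ u in Set.Ioo s (min (s + ε) T),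
          φ ‖Function.leftLim x u - x s‖ ∂hb.stieltjesFunction.measure) :
    Tendsto
      (fun ε : ℝ => ⨆ t : Set.Icc (0 : ℝ) T,
        |(1 / ε) * ∫ s in (0 : ℝ)..(t.1 : ℝ),
            (F (min (s + ε) T) x -
                F (min (s + ε) T) (bplus (stopAt x s) (min (s + ε) T) (x (min (s + ε) T)))) *
              (n (min (s + ε) T) - n s)|)
      (𝓝[>] 0) (𝓝 0) := by
  have hS : IsBounded (closure (x '' Icc 0 T)) := hx.isBounded_image.closure
  obtain ⟨M, hM⟩ := hφb (diam (closure (x '' Icc 0 T)) + 1) (by positivity)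
  refine tendsto_iSup_abs_integral_mul_sub hT.le hb.stieltjesFunction.mono (le_max_right M 0)
    (fun s hs ε hε => (hbound s hs ε hε).trans ?_) hn
  refine hb.stieltjesFunction.setIntegral_Ioo_le (le_min (by linarith) hs.2) (le_max_right M 0)
    fun u hu => (hM (mem_image_of_mem φ ⟨norm_nonneg _, ?_⟩)).trans (le_max_left M 0)
  have hu : u ∈ Ioc 0 T := ⟨hs.1.trans_lt hu.1, hu.2.le.trans (min_le_right _ _)⟩
  rw [← dist_eq_norm]
  linarith [dist_le_diam_of_mem hS (hx.leftLim_mem_closure hu)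
    (subset_closure (mem_image_of_mem x hs))]

/-- Pathwise sufficient condition for Assumption (A): if the horizontal increments of `F` along
`x` are controlled by a Lebesgue–Stieltjes integral of `φ(|x(u-) - x(s)|)` with respect to a
non-decreasing `b`, where `φ ≥ 0` is bounded on compacts, then for any continuous `n`,
`sup_{t∈[0,T]} |(1/ε) ∫₀^t (F(s⊕ε, x) - F(s⊕ε, x_{s∧} ⊞_{s⊕ε} x(s⊕ε))) (n(s⊕ε) - n(s)) ds| → 0`
as `ε ↓ 0`, where `s⊕ε = (s+ε)∧T`. -/
theorem stmt8 (T : ℝ) (hT : 0 < T) (d : ℕ) (hd : 1 ≤ d)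
    (F : ℝ → (ℝ → EuclideanSpace ℝ (Fin d)) → ℝ) (hF : NonAnticipative T F)
    (x : ℝ → EuclideanSpace ℝ (Fin d)) (hx : IsCadlagOn T x)
    (n : ℝ → ℝ) (hn : ContinuousOn n (Set.Icc (0 : ℝ) T))
    (φ : ℝ → ℝ) (hφ0 : ∀ r, 0 ≤ φ r)
    (hφb : ∀ K > (0 : ℝ), BddAbove (φ '' Set.Icc (0 : ℝ) K))
    (b : ℝ → ℝ) (hb : Monotone b)
    (hbound : ∀ s ∈ Set.Icc (0 : ℝ) T, ∀ ε > (0 : ℝ),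
      |F (min (s + ε) T) x -
          F (min (s + ε) T) (bplus (stopAt x s) (min (s + ε) T) (x (min (s + ε) T)))| ≤
        ∫ u in Set.Ioo s (min (s + ε) T),
          φ ‖Function.leftLim x u - x s‖ ∂hb.stieltjesFunction.measure) :
    Tendsto
      (fun ε : ℝ => ⨆ t : Set.Icc (0 : ℝ) T,
        |(1 / ε) * ∫ s in (0 : ℝ)..(t.1 : ℝ),
            (F (min (s + ε) T) x -
                F (min (s + ε) T) (bplus (stopAt x s) (min (s + ε) T) (x (min (s + ε) T)))) *
              (n (min (s + ε) T) - n s)|)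
      (𝓝[>] 0) (𝓝 0) :=
  stmt8_general T hT d F x hx n hn φ hφb b hb hbound
end
end

section
/- Let F ∈ C^{0,1}(Θ) be such that ∇_x F is locally uniformly continuous with moduli of continuity δ_K(∇_x F, ·). Let x : [0,T] → ℝ^d be càdlàg with ‖x‖ ≤ C and Σ_{s∈(0,T]} |Δx(s)|² < ∞. Then for every ε ∈ (0,1]: Σ_{s∈(0,T], 0<|Δx(s)|<ε} | F(s, x_{s∧}) − F(s, x⁻_{s∧}) − Δx(s) · ∇_x F(s, x⁻_{s∧}) |² ≤ δ_{C+1}(∇_x F, ε)² · Σ_{s∈(0,T]} |Δx(s)|². -/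
/-! Along the segment `r ↦ x⁻_{s∧} ⊕_s r Δx(s)`, `r ∈ [0,1]`, from `x⁻_{s∧}` to `x_{s∧}`, the
paths stay bounded by `C + 1` and within `d_Θ`-distance `|Δx(s)| < ε` of each other, so the
vertical gradient varies by at most `δ_{C+1}(ε)`. The mean value inequality then bounds the
first-order remainder at each small jump by `δ_{C+1}(ε) |Δx(s)|`; square and sum. -/

noncomputable section
open Filter Topology

/-- The predictable stopped path `x⁻_{t∧}`. -/
def pstopAt {E : Type*} [TopologicalSpace E] (x : ℝ → E) (t : ℝ) : ℝ → E :=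
  fun s => if s < t then x s else Function.leftLim x t

/-- The vertically bumped path `x ⊕_t y`. -/
def vplus {E : Type*} [Add E] (x : ℝ → E) (t : ℝ) (y : E) : ℝ → E :=
  fun s => if s < t then x s else x t + y

/-- The jump `Δx(t) = x(t) - x(t-)`. -/
def jumpAt {E : Type*} [TopologicalSpace E] [Sub E] (x : ℝ → E) (t : ℝ) : E :=
  x t - Function.leftLim x t

/-- The pseudo-distance `d_Θ` on `Θ = [0,T] × D([0,T])`:
`d_Θ((t,x),(t',x')) = |t - t'| + sup_{s ∈ [0,T]} ‖x_{t∧}(s) - x'_{t'∧}(s)‖`. -/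
def dTheta {E : Type*} [SeminormedAddGroup E] (T : ℝ) (p q : ℝ × (ℝ → E)) : ℝ :=
  |p.1 - q.1| + ⨆ s : Set.Icc (0 : ℝ) T, ‖stopAt p.2 p.1 s.1 - stopAt q.2 q.1 s.1‖

/-- `F` is vertically differentiable at `(t,x)` with vertical gradient `G`:
the map `y ↦ F(t, x ⊕_t y)` has gradient `G` at `0`. -/
def HasVerticalGradientAt {d : ℕ} (F : ℝ → (ℝ → EuclideanSpace ℝ (Fin d)) → ℝ)
    (G : EuclideanSpace ℝ (Fin d)) (t : ℝ) (x : ℝ → EuclideanSpace ℝ (Fin d)) : Prop :=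
  HasGradientAt (fun y => F t (vplus x t y)) G 0

/-- `F ∈ C^{0,1}(Θ)` with vertical gradient functional `G = ∇_x F`: `F` and `G` are
non-anticipative, `G t x` is the vertical gradient of `F` at every `(t,x) ∈ Θ`, and `G` is
continuous on `Θ` with respect to `d_Θ`. -/
def IsC01 {d : ℕ} (T : ℝ) (F : ℝ → (ℝ → EuclideanSpace ℝ (Fin d)) → ℝ)
    (G : ℝ → (ℝ → EuclideanSpace ℝ (Fin d)) → EuclideanSpace ℝ (Fin d)) : Prop :=
  NonAnticipative T F ∧ NonAnticipative T G ∧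
  (∀ t ∈ Set.Icc (0 : ℝ) T, ∀ x, IsCadlagOn T x → HasVerticalGradientAt F (G t x) t x) ∧
  (∀ t ∈ Set.Icc (0 : ℝ) T, ∀ x, IsCadlagOn T x → ∀ ε > (0 : ℝ), ∃ δ > (0 : ℝ),
    ∀ t' ∈ Set.Icc (0 : ℝ) T, ∀ x', IsCadlagOn T x' →
      dTheta T (t, x) (t', x') < δ → ‖G t x - G t' x'‖ < ε)

/-- `δ` is a family of moduli of continuity witnessing the local uniform continuity of `G`:
for each `K`, `δ K` is non-negative and non-decreasing on `ℝ₊`, continuous at `0` and vanishing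
at `0`, and `‖G(t,x) - G(t',x')‖ ≤ δ K (d_Θ((t,x),(t',x')))` whenever `‖x‖ ∨ ‖x'‖ ≤ K`. -/
def IsModulusFamily {d : ℕ} (T : ℝ)
    (G : ℝ → (ℝ → EuclideanSpace ℝ (Fin d)) → EuclideanSpace ℝ (Fin d))
    (δ : ℝ → ℝ → ℝ) : Prop :=
  (∀ K r, 0 ≤ r → 0 ≤ δ K r) ∧ (∀ K, MonotoneOn (δ K) (Set.Ici 0)) ∧
  (∀ K, ContinuousWithinAt (δ K) (Set.Ici 0) 0) ∧ (∀ K, δ K 0 = 0) ∧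
  ∀ K > (0 : ℝ), ∀ t ∈ Set.Icc (0 : ℝ) T, ∀ t' ∈ Set.Icc (0 : ℝ) T, ∀ x x',
    IsCadlagOn T x → IsCadlagOn T x' →
    (∀ s ∈ Set.Icc (0 : ℝ) T, ‖x s‖ ≤ K) → (∀ s ∈ Set.Icc (0 : ℝ) T, ‖x' s‖ ≤ K) →
    ‖G t x - G t' x'‖ ≤ δ K (dTheta T (t, x) (t', x'))

section Paths

variable {E : Type*}

lemma IsCadlagOn.ite_lt [TopologicalSpace E] {T : ℝ} {x : ℝ → E} (hx : IsCadlagOn T x)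
    (s : ℝ) (c : E) : IsCadlagOn T (fun u => if u < s then x u else c) := by
  constructor
  · intro t ht
    by_cases h : t < s
    · refine (hx.1 t ht).congr_of_eventuallyEq ?_ (by simp [h])
      filter_upwards [nhdsWithin_le_nhds (Iio_mem_nhds h)] with u hu
      simp [Set.mem_Iio.mp hu]
    · refine (continuousWithinAt_const (b := c)).congr_of_eventuallyEq ?_ (by simp [h])
      filter_upwards [self_mem_nhdsWithin] with u hu
      simp [not_lt.mpr (le_trans (not_lt.mp h) hu)]
  · intro t ht
    by_cases h : t ≤ s
    · obtain ⟨L, hL⟩ := hx.2 t ht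
      refine ⟨L, hL.congr' ?_⟩
      filter_upwards [self_mem_nhdsWithin] with u hu
      simp [lt_of_lt_of_le hu h]
    · refine ⟨c, tendsto_const_nhds.congr' ?_⟩
      filter_upwards [Ioo_mem_nhdsLT_of_mem ⟨not_le.mp h, le_refl t⟩] with u hu
      simp [not_lt.mpr hu.1.le]

lemma IsCadlagOn.pstopAt [TopologicalSpace E] {T : ℝ} {x : ℝ → E} (hx : IsCadlagOn T x)
    (s : ℝ) : IsCadlagOn T (pstopAt x s) :=
  hx.ite_lt s _

lemma IsCadlagOn.vplus [TopologicalSpace E] [Add E] {T : ℝ} {x : ℝ → E}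
    (hx : IsCadlagOn T x) (s : ℝ) (y : E) : IsCadlagOn T (vplus x s y) :=
  hx.ite_lt s _

lemma norm_leftLim_le [NormedAddGroup E] {T C s : ℝ} {x : ℝ → E} (hx : IsCadlagOn T x)
    (hxC : ∀ u ∈ Set.Icc (0 : ℝ) T, ‖x u‖ ≤ C) (hs : s ∈ Set.Ioc (0 : ℝ) T) :
    ‖Function.leftLim x s‖ ≤ C := by
  obtain ⟨L, hL⟩ := hx.2 s hs
  rw [leftLim_eq_of_tendsto hL]
  refine le_of_tendsto hL.norm ?_
  filter_upwards [Ioo_mem_nhdsLT_of_mem ⟨hs.1, le_refl s⟩] with u hu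
  exact hxC u ⟨hu.1.le, hu.2.le.trans hs.2⟩

lemma vplus_vplus [AddSemigroup E] (x : ℝ → E) (s : ℝ) (y y' : E) :
    vplus (vplus x s y) s y' = vplus x s (y + y') := by
  funext u
  by_cases h : u < s <;> simp [vplus, h, add_assoc]

lemma vplus_pstopAt_zero [TopologicalSpace E] [AddZeroClass E] (x : ℝ → E) (s : ℝ) :
    vplus (pstopAt x s) s 0 = pstopAt x s := by
  funext u
  by_cases h : u < s <;> simp [vplus, pstopAt, h]

lemma vplus_pstopAt_jumpAt [TopologicalSpace E] [AddCommGroup E] (x : ℝ → E) (s : ℝ) :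
    vplus (pstopAt x s) s (jumpAt x s) = stopAt x s := by
  funext u
  by_cases h : u < s <;> simp [vplus, pstopAt, stopAt, jumpAt, h]

lemma dTheta_nonneg [SeminormedAddGroup E] (T : ℝ) (p q : ℝ × (ℝ → E)) :
    0 ≤ dTheta T p q :=
  add_nonneg (abs_nonneg _) (Real.iSup_nonneg fun _ => norm_nonneg _)

lemma dTheta_vplus_le [SeminormedAddCommGroup E] (T s : ℝ) (x : ℝ → E) (y y' : E) :
    dTheta T (s, vplus x s y) (s, vplus x s y') ≤ ‖y - y'‖ := by
  simp only [dTheta, sub_self, abs_zero, zero_add]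
  refine Real.iSup_le (fun u => ?_) (norm_nonneg _)
  by_cases h : u.1 < s
  · simp [stopAt, vplus, h]
  · simp [stopAt, vplus, h, add_sub_add_left_eq_sub]

end Paths

section VerticalCalculus

variable {d : ℕ} {F : ℝ → (ℝ → EuclideanSpace ℝ (Fin d)) → ℝ}

lemma HasVerticalGradientAt.hasDerivAt_vplus_smul {g v : EuclideanSpace ℝ (Fin d)} {t r : ℝ}
    {x : ℝ → EuclideanSpace ℝ (Fin d)} (h : HasVerticalGradientAt F g t (vplus x t (r • v))) :
    HasDerivAt (fun r' => F t (vplus x t (r' • v))) (inner ℝ v g) r := by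
  have hline : HasDerivAt (fun r' : ℝ => (r' - r) • v) ((1 : ℝ) • v) r :=
    ((hasDerivAt_id r).sub_const r).smul_const v
  have hF : HasFDerivAt (fun y => F t (vplus (vplus x t (r • v)) t y))
      (InnerProductSpace.toDual ℝ _ g) ((r - r) • v) := by
    simpa using h.hasFDerivAt
  have hcomp : (fun r' => F t (vplus x t (r' • v))) =
      (fun y => F t (vplus (vplus x t (r • v)) t y)) ∘ fun r' => (r' - r) • v := by
    funext r'
    simp only [Function.comp_apply, vplus_vplus, ← add_smul, add_sub_cancel]
  have key := hF.comp_hasDerivAt r hline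
  rwa [← hcomp, one_smul, InnerProductSpace.toDual_apply_apply, real_inner_comm] at key

lemma abs_vplus_sub_sub_inner_le {g : ℝ → EuclideanSpace ℝ (Fin d)} {t M : ℝ}
    {x : ℝ → EuclideanSpace ℝ (Fin d)} {v : EuclideanSpace ℝ (Fin d)}
    (hF : ∀ r ∈ Set.Icc (0 : ℝ) 1, HasVerticalGradientAt F (g r) t (vplus x t (r • v)))
    (hg : ∀ r ∈ Set.Icc (0 : ℝ) 1, ‖g r - g 0‖ ≤ M) :
    |F t (vplus x t v) - F t (vplus x t 0) - inner ℝ v (g 0)| ≤ M * ‖v‖ := by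
  set c : ℝ := inner ℝ v (g 0)
  have hder : ∀ r ∈ Set.Icc (0 : ℝ) 1, HasDerivWithinAt
      (fun r' => F t (vplus x t (r' • v)) - r' * c) (inner ℝ v (g r) - c) (Set.Icc 0 1) r :=
    fun r hr => ((hF r hr).hasDerivAt_vplus_smul.sub (hasDerivAt_mul_const c)).hasDerivWithinAt
  have hbound : ∀ r ∈ Set.Icc (0 : ℝ) 1, ‖inner ℝ v (g r) - c‖ ≤ M * ‖v‖ := fun r hr =>
    calc ‖inner ℝ v (g r) - c‖ = ‖inner ℝ v (g r - g 0)‖ := by rw [inner_sub_right]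
      _ ≤ ‖v‖ * ‖g r - g 0‖ := norm_inner_le_norm _ _
      _ ≤ M * ‖v‖ := by rw [mul_comm]; gcongr; exact hg r hr
  have hmvt := (convex_Icc (0 : ℝ) 1).norm_image_sub_le_of_norm_hasDerivWithin_le hder hbound
    (Set.left_mem_Icc.mpr zero_le_one) (Set.right_mem_Icc.mpr zero_le_one)
  simp only [one_smul, zero_smul, one_mul, zero_mul, sub_zero, Real.norm_eq_abs, abs_one,
    mul_one] at hmvt
  rwa [sub_right_comm]

end VerticalCalculus

lemma abs_jump_remainder_le {T : ℝ} {d : ℕ} {F : ℝ → (ℝ → EuclideanSpace ℝ (Fin d)) → ℝ}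
    {G : ℝ → (ℝ → EuclideanSpace ℝ (Fin d)) → EuclideanSpace ℝ (Fin d)}
    (hFG : IsC01 T F G) {δ : ℝ → ℝ → ℝ} (hδ : IsModulusFamily T G δ)
    {x : ℝ → EuclideanSpace ℝ (Fin d)} (hx : IsCadlagOn T x)
    {C : ℝ} (hxC : ∀ s ∈ Set.Icc (0 : ℝ) T, ‖x s‖ ≤ C) {ε : ℝ} (hε : ε ≤ 1)
    {s : ℝ} (hs : s ∈ Set.Ioc (0 : ℝ) T) (hsε : ‖jumpAt x s‖ < ε) :
    |F s (stopAt x s) - F s (pstopAt x s) - inner ℝ (jumpAt x s) (G s (pstopAt x s))| ≤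
      δ (C + 1) ε * ‖jumpAt x s‖ := by
  obtain ⟨-, -, hgradF, -⟩ := hFG
  obtain ⟨-, hmono, -, -, hmod⟩ := hδ
  set J := jumpAt x s with hJ
  set path : ℝ → ℝ → EuclideanSpace ℝ (Fin d) := fun r => vplus (pstopAt x s) s (r • J)
    with hpath
  have hsIcc : s ∈ Set.Icc (0 : ℝ) T := ⟨hs.1.le, hs.2⟩
  have hC : 0 < C + 1 := by linarith [(norm_nonneg _).trans (hxC s hsIcc)]
  have hcadlag : ∀ r, IsCadlagOn T (path r) := fun r => (hx.pstopAt s).vplus s _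
  have hsmall : ∀ r ∈ Set.Icc (0 : ℝ) 1, ‖r • J‖ ≤ ε := fun r hr => by
    rw [norm_smul, Real.norm_of_nonneg hr.1]
    nlinarith [norm_nonneg J, hr.2]
  have hbdd : ∀ r ∈ Set.Icc (0 : ℝ) 1, ∀ u ∈ Set.Icc (0 : ℝ) T, ‖path r u‖ ≤ C + 1 := by
    intro r hr u hu
    by_cases h : u < s
    · simp only [path, vplus, pstopAt, if_pos h]
      linarith [hxC u hu]
    · simp only [path, vplus, pstopAt, if_neg h, lt_irrefl, if_false]
      linarith [norm_add_le (Function.leftLim x s) (r • J), norm_leftLim_le hx hxC hs,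
        hsmall r hr]
  have hgrad : ∀ r ∈ Set.Icc (0 : ℝ) 1, ‖G s (path r) - G s (path 0)‖ ≤ δ (C + 1) ε := by
    intro r hr
    have h0 : (0 : ℝ) ∈ Set.Icc (0 : ℝ) 1 := Set.left_mem_Icc.mpr zero_le_one
    have hdist : dTheta T (s, path r) (s, path 0) ≤ ε :=
      calc dTheta T (s, path r) (s, path 0) ≤ ‖r • J - (0 : ℝ) • J‖ := dTheta_vplus_le T s _ _ _
        _ ≤ ε := by simpa using hsmall r hr
    exact (hmod (C + 1) hC s hsIcc s hsIcc _ _ (hcadlag r) (hcadlag 0) (hbdd r hr)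
      (hbdd 0 h0)).trans (hmono (C + 1) (dTheta_nonneg T _ _)
        ((dTheta_nonneg T _ _).trans hdist) hdist)
  have key := abs_vplus_sub_sub_inner_le (F := F) (g := fun r => G s (path r))
    (fun r _ => hgradF s hsIcc _ (hcadlag r)) hgrad
  simpa only [hpath, hJ, zero_smul, vplus_pstopAt_zero, vplus_pstopAt_jumpAt] using key

lemma tsum_subtype_le_tsum_subtype_of_imp {α : Type*} {p q : α → Prop} (hpq : ∀ a, p a → q a)
    {f : Subtype p → ℝ} {g : Subtype q → ℝ} (hf : 0 ≤ f) (hg : 0 ≤ g)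
    (hfg : ∀ a, f a ≤ g ⟨a, hpq a a.2⟩) (hgs : Summable g) :
    ∑' a, f a ≤ ∑' a, g a := by
  let ι := Subtype.impEmbedding p q hpq
  have hfs : Summable f := (hgs.comp_injective ι.injective).of_nonneg_of_le hf hfg
  exact hfs.tsum_le_tsum_of_inj ι ι.injective (fun a _ => hg a) hfg hgs

theorem stmt10_general (T : ℝ) (d : ℕ)
    (F : ℝ → (ℝ → EuclideanSpace ℝ (Fin d)) → ℝ)
    (G : ℝ → (ℝ → EuclideanSpace ℝ (Fin d)) → EuclideanSpace ℝ (Fin d))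
    (hFG : IsC01 T F G) (δ : ℝ → ℝ → ℝ) (hδ : IsModulusFamily T G δ)
    (x : ℝ → EuclideanSpace ℝ (Fin d)) (hx : IsCadlagOn T x)
    (C : ℝ) (hxC : ∀ s ∈ Set.Icc (0 : ℝ) T, ‖x s‖ ≤ C)
    (hjump : Summable (fun s : Set.Ioc (0 : ℝ) T => ‖jumpAt x s.1‖ ^ 2))
    (ε : ℝ) (hε : ε ∈ Set.Ioc (0 : ℝ) 1) :
    ∑' s : {s : ℝ // s ∈ Set.Ioc (0 : ℝ) T ∧ jumpAt x s ≠ 0 ∧ ‖jumpAt x s‖ < ε},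
        |F s.1 (stopAt x s.1) - F s.1 (pstopAt x s.1) -
            (inner ℝ (jumpAt x s.1) (G s.1 (pstopAt x s.1)) : ℝ)| ^ 2 ≤
      δ (C + 1) ε ^ 2 * ∑' s : Set.Ioc (0 : ℝ) T, ‖jumpAt x s.1‖ ^ 2 := by
  rw [← tsum_mul_left]
  refine tsum_subtype_le_tsum_subtype_of_imp (fun s hs => hs.1) (fun _ => sq_nonneg _)
    (fun _ => by positivity) (fun s => ?_) (hjump.mul_left _)
  rw [← mul_pow]
  exact pow_le_pow_left₀ (abs_nonneg _)
    (abs_jump_remainder_le hFG hδ hx hxC hε.2 s.2.1 s.2.2.2) 2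

/-- Small-jump estimate: for `F ∈ C^{0,1}(Θ)` with `∇_x F` locally uniformly continuous with
moduli `δ_K`, a càdlàg path `x` bounded by `C` with square-summable jumps, and `ε ∈ (0,1]`,
`Σ_{0<|Δx(s)|<ε} |F(s,x_{s∧}) - F(s,x⁻_{s∧}) - Δx(s)•∇_x F(s,x⁻_{s∧})|²
   ≤ δ_{C+1}(∇_x F, ε)² Σ_{s∈(0,T]} |Δx(s)|²`. -/
theorem stmt10 (T : ℝ) (hT : 0 < T) (d : ℕ) (hd : 1 ≤ d)
    (F : ℝ → (ℝ → EuclideanSpace ℝ (Fin d)) → ℝ)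
    (G : ℝ → (ℝ → EuclideanSpace ℝ (Fin d)) → EuclideanSpace ℝ (Fin d))
    (hFG : IsC01 T F G) (δ : ℝ → ℝ → ℝ) (hδ : IsModulusFamily T G δ)
    (x : ℝ → EuclideanSpace ℝ (Fin d)) (hx : IsCadlagOn T x)
    (C : ℝ) (hxC : ∀ s ∈ Set.Icc (0 : ℝ) T, ‖x s‖ ≤ C)
    (hjump : Summable (fun s : Set.Ioc (0 : ℝ) T => ‖jumpAt x s.1‖ ^ 2))
    (ε : ℝ) (hε : ε ∈ Set.Ioc (0 : ℝ) 1) :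
    ∑' s : {s : ℝ // s ∈ Set.Ioc (0 : ℝ) T ∧ jumpAt x s ≠ 0 ∧ ‖jumpAt x s‖ < ε},
        |F s.1 (stopAt x s.1) - F s.1 (pstopAt x s.1) -
            (inner ℝ (jumpAt x s.1) (G s.1 (pstopAt x s.1)) : ℝ)| ^ 2 ≤
      δ (C + 1) ε ^ 2 * ∑' s : Set.Ioc (0 : ℝ) T, ‖jumpAt x s.1‖ ^ 2 :=
  stmt10_general T d F G hFG δ hδ x hx C hxC hjump ε hε
end
end
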